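/- Let κ > 0 and take ρ = −(κ+4)/2. On {(x,y) ∈ ℝ² : x > y} define Λ(x,y) = ((κ−4)(κ−2)(κ+4)/(2κ²))·[ (x−y)^{(3κ−4)/(2κ)} log(x−y) + (x−y)^{−(κ+4)/(2κ)}·(4κ x² − (4κ+κ²) y²)/16 ]. Then A_{κ;−(κ+4)/2} Λ = 0 identically on this domain. -/

import Mathlib

/-- Logarithmic partner of the grade-two singular vector over the SLE_κ(ρ=-(κ+4)/2)
partition function. -/
noncomputable def Λ10 (κ x y : ℝ) : ℝ :=
  (κ - 4) * (κ - 2) * (κ + 4) / (2 * κ ^ 2) *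
    ((x - y) ^ ((3 * κ - 4) / (2 * κ)) * Real.log (x - y)
      + (x - y) ^ (-(κ + 4) / (2 * κ))
          * (4 * κ * x ^ 2 - (4 * κ + κ ^ 2) * y ^ 2) / 16)

/-!
Write `t = x - y`. The operator sends `t ^ p` to `I(p) t ^ (p - 2)` with
`I(p) = κ / 2 * p * (p - 1) + 2 * p - (κ + 4) * (3 * κ - 4) / (8 * κ)`, whose roots are
`b = -(κ + 4) / (2 * κ)` and `b + 2 = (3 * κ - 4) / (2 * κ)`. Hence `Λ = C t ^ b R` with
`R = t ^ 2 log t + (4κx² - (4κ + κ²)y²) / 16`, and conjugating by `t ^ b` removes the potential term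
because `I(b) = 0`. On `t ^ 2 log t` the remaining operator leaves no `log t`, since `b + 2` is also
a root, only `I'(b + 2) = κ`; the quadratic part of `R` contributes exactly `-κ`.
-/

open Real

noncomputable section

/-- The operator `A_{κ;ρ}` with potential coefficient `c = ρ (ρ + 4 - κ) / (2 κ)`. -/
def sleOp (κ c : ℝ) (φ : ℝ → ℝ → ℝ) (x y : ℝ) : ℝ :=
  κ / 2 * deriv (fun x' => deriv (fun x'' => φ x'' y) x') x
    + 2 / (y - x) * deriv (fun y' => φ x y') y - c / (y - x) ^ 2 * φ x y

def logPartnerCofactor (κ x y : ℝ) : ℝ :=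
  (x - y) ^ 2 * log (x - y) + (4 * κ * x ^ 2 - (4 * κ + κ ^ 2) * y ^ 2) / 16

end

theorem sleOp_congr {κ c : ℝ} {φ ψ : ℝ → ℝ → ℝ} (h : ∀ x y, y < x → φ x y = ψ x y)
    {x y : ℝ} (hxy : y < x) : sleOp κ c φ x y = sleOp κ c ψ x y := by
  have hx : ∀ᶠ x' in nhds x, deriv (fun x'' => φ x'' y) x' = deriv (fun x'' => ψ x'' y) x' := by
    filter_upwards [eventually_gt_nhds hxy] with x' hx'
    refine Filter.EventuallyEq.deriv_eq ?_
    filter_upwards [eventually_gt_nhds hx'] with x'' hx''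
    exact h x'' y hx''
  have hy : (fun y' => φ x y') =ᶠ[nhds y] fun y' => ψ x y' := by
    filter_upwards [eventually_lt_nhds hxy] with y' hy'
    exact h x y' hy'
  simp only [sleOp, Filter.EventuallyEq.deriv_eq hx, hy.deriv_eq, h x y hxy]

theorem sleOp_const_mul (κ c a : ℝ) (φ : ℝ → ℝ → ℝ) (x y : ℝ) :
    sleOp κ c (fun x y => a * φ x y) x y = a * sleOp κ c φ x y := by
  simp only [sleOp, deriv_const_mul_field']
  ring

theorem hasDerivAt_sub_rpow_mul {y p x r' : ℝ} {R : ℝ → ℝ} (hxy : y < x)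
    (hR : HasDerivAt R r' x) :
    HasDerivAt (fun x' => (x' - y) ^ p * R x')
      (p * (x - y) ^ (p - 1) * R x + (x - y) ^ p * r') x := by
  have h := ((hasDerivAt_id' x).sub_const y).rpow_const (p := p) (Or.inl (sub_pos.2 hxy).ne')
  exact (h.mul hR).congr_deriv (by ring)

theorem hasDerivAt_rpow_sub_mul {x p y r' : ℝ} {R : ℝ → ℝ} (hxy : y < x)
    (hR : HasDerivAt R r' y) :
    HasDerivAt (fun y' => (x - y') ^ p * R y')
      (-(p * (x - y) ^ (p - 1) * R y) + (x - y) ^ p * r') y := by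
  have h := ((hasDerivAt_id' y).const_sub x).rpow_const (p := p) (Or.inl (sub_pos.2 hxy).ne')
  exact (h.mul hR).congr_deriv (by ring)

theorem sleOp_rpow_mul {κ c p : ℝ} {R : ℝ → ℝ → ℝ} {Rx : ℝ → ℝ} {Rxx Ry x y : ℝ} (hxy : y < x)
    (hRx : ∀ x', y < x' → HasDerivAt (fun x'' => R x'' y) (Rx x') x')
    (hRxx : HasDerivAt Rx Rxx x) (hRy : HasDerivAt (fun y' => R x y') Ry y) :
    sleOp κ c (fun x y => (x - y) ^ p * R x y) x y = (x - y) ^ p *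
      (κ / 2 * Rxx + κ * p * Rx x / (x - y) - 2 * Ry / (x - y)
        + (κ / 2 * p * (p - 1) + 2 * p - c) * R x y / (x - y) ^ 2) := by
  have hfirst : ∀ᶠ x' in nhds x, deriv (fun x'' => (x'' - y) ^ p * R x'' y) x' =
      p * ((x' - y) ^ (p - 1) * R x' y) + (x' - y) ^ p * Rx x' := by
    filter_upwards [eventually_gt_nhds hxy] with x' hx'
    rw [(hasDerivAt_sub_rpow_mul hx' (hRx x' hx')).deriv, mul_assoc]
  have hsecond :=
    ((hasDerivAt_sub_rpow_mul (p := p - 1) hxy (hRx x hxy)).const_mul p).fun_add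
      (hasDerivAt_sub_rpow_mul (p := p) hxy hRxx)
  have ht : x - y ≠ 0 := (sub_pos.2 hxy).ne'
  simp only [sleOp, Filter.EventuallyEq.deriv_eq hfirst, hsecond.deriv,
    (hasDerivAt_rpow_sub_mul (p := p) hxy hRy).deriv, rpow_sub_one ht]
  rw [show y - x = -(x - y) by ring]
  field_simp
  ring

theorem hasDerivAt_sq_mul_log {t : ℝ} (ht : t ≠ 0) :
    HasDerivAt (fun t => t ^ 2 * log t) (2 * (t * log t) + t) t :=
  ((hasDerivAt_pow 2 t).mul (hasDerivAt_log ht)).congr_deriv (by field_simp; ring)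

section logPartnerCofactor

variable {κ x y : ℝ}

theorem hasDerivAt_logPartnerCofactor_left (hxy : y < x) :
    HasDerivAt (fun x' => logPartnerCofactor κ x' y)
      (2 * ((x - y) * log (x - y)) + (x - y) + κ * x / 2) x := by
  have hlog := (hasDerivAt_sq_mul_log (sub_pos.2 hxy).ne').comp x ((hasDerivAt_id' x).sub_const y)
  have hquad :=
    (((hasDerivAt_pow 2 x).const_mul (4 * κ)).sub_const ((4 * κ + κ ^ 2) * y ^ 2)).div_const 16
  exact (hlog.add hquad).congr_deriv (by ring)

theorem hasDerivAt_logPartnerCofactor_left_deriv (hxy : y < x) :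
    HasDerivAt (fun x' => 2 * ((x' - y) * log (x' - y)) + (x' - y) + κ * x' / 2)
      (2 * log (x - y) + 3 + κ / 2) x := by
  have hlog :=
    (Real.hasDerivAt_mul_log (sub_pos.2 hxy).ne').comp x ((hasDerivAt_id' x).sub_const y)
  exact (((hlog.const_mul 2).add ((hasDerivAt_id' x).sub_const y)).add
    (((hasDerivAt_id' x).const_mul κ).div_const 2)).congr_deriv (by ring)

theorem hasDerivAt_logPartnerCofactor_right (hxy : y < x) :
    HasDerivAt (fun y' => logPartnerCofactor κ x y')
      (-(2 * ((x - y) * log (x - y)) + (x - y)) - (4 * κ + κ ^ 2) * y / 8) y := by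
  have hlog := (hasDerivAt_sq_mul_log (sub_pos.2 hxy).ne').comp y ((hasDerivAt_id' y).const_sub x)
  have hquad :=
    (((hasDerivAt_pow 2 y).const_mul (4 * κ + κ ^ 2)).const_sub (4 * κ * x ^ 2)).div_const 16
  exact (hlog.add hquad).congr_deriv (by ring)

theorem Λ10_eq_mul_rpow_mul_logPartnerCofactor (hκ : κ ≠ 0) (hxy : y < x) :
    Λ10 κ x y = (κ - 4) * (κ - 2) * (κ + 4) / (2 * κ ^ 2) *
      ((x - y) ^ (-(κ + 4) / (2 * κ)) * logPartnerCofactor κ x y) := by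
  have hexp : (3 * κ - 4) / (2 * κ) = -(κ + 4) / (2 * κ) + (2 : ℕ) := by
    push_cast; field_simp; ring
  rw [Λ10, logPartnerCofactor, hexp, rpow_add (sub_pos.2 hxy), rpow_natCast]
  ring

end logPartnerCofactor

/-- For `ρ = -(κ+4)/2`, `A_{κ;ρ} Λ = 0` identically on `{x > y}`. -/
theorem stmt_10 (κ : ℝ) (hκ : 0 < κ) (ρ : ℝ) (hρ : ρ = -(κ + 4) / 2) :
    ∀ x y : ℝ, y < x →
      κ / 2 * deriv (fun x' => deriv (fun x'' => Λ10 κ x'' y) x') x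
        + 2 / (y - x) * deriv (fun y' => Λ10 κ x y') y
        - ρ * (ρ + 4 - κ) / (2 * κ) / (y - x) ^ 2 * Λ10 κ x y = 0 := by
  intro x y hxy
  subst hρ
  have hκ₀ : κ ≠ 0 := hκ.ne'
  change sleOp κ _ (Λ10 κ) x y = 0
  rw [sleOp_congr (fun _ _ => Λ10_eq_mul_rpow_mul_logPartnerCofactor hκ₀) hxy, sleOp_const_mul,
    sleOp_rpow_mul hxy (fun _ => hasDerivAt_logPartnerCofactor_left)
      (hasDerivAt_logPartnerCofactor_left_deriv hxy) (hasDerivAt_logPartnerCofactor_right hxy)]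
  have hindicial : κ / 2 * (-(κ + 4) / (2 * κ)) * (-(κ + 4) / (2 * κ) - 1)
      + 2 * (-(κ + 4) / (2 * κ)) - -(κ + 4) / 2 * (-(κ + 4) / 2 + 4 - κ) / (2 * κ) = 0 := by
    field_simp
    ring
  rw [hindicial, zero_mul, zero_div, add_zero]
  have ht : x - y ≠ 0 := (sub_pos.2 hxy).ne'
  field_simp
  ring
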